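/- Let N = N(Q_n, m, r) be a quasi Q_n-filiform Lie algebra which is indecomposable (N cannot be decomposed into a direct sum of two nonzero ideals). Then for every derivation δ of N, λ_1 = λ_2 = ... = λ_m, where λ_s = (n-2)·c^{s0}_{s0} + 2·c^{s1}_{s1}. -/

import Mathlib

open Finset

/-- A quasi `Qₙ`-filiform Lie algebra `N = N(Qₙ, m, r)`: a finite-dimensional complex
nilpotent Lie algebra which is the sum of `m` pairwise commuting subalgebras, each
isomorphic to the filiform Lie algebra `Qₙ` with basis `e i 0, …, e i n` satisfying the
`Qₙ` bracket relations, and such that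
`{e 1 0, …, e 1 (n-1), …, e m 0, …, e m (n-1), e 1 n, …, e r n}` is a basis of `N`,
where `r = dim c^{n-1} N`. -/
structure QuasiQnFiliform (n m r : ℕ) (N : Type*) [LieRing N] [LieAlgebra ℂ N] : Type _ where
  /-- the distinguished vectors `e_{ij}`, for `1 ≤ i ≤ m`, `0 ≤ j ≤ n` -/
  e : ℕ → ℕ → N
  /-- `N` is nilpotent -/
  nilpotent : LieRing.IsNilpotent N
  /-- `N` is finite-dimensional -/
  findim : FiniteDimensional ℂ N
  /-- `[e_{i0}, e_{ij}] = e_{i,j+1}` for `1 ≤ j ≤ n - 2` -/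
  bracket_e0 : ∀ i j, 1 ≤ i → i ≤ m → 1 ≤ j → j ≤ n - 2 → ⁅e i 0, e i j⁆ = e i (j + 1)
  /-- `[e_{i0}, e_{i,n-1}] = 0` -/
  bracket_e0_top : ∀ i, 1 ≤ i → i ≤ m → ⁅e i 0, e i (n - 1)⁆ = 0
  /-- `[e_{i0}, e_{in}] = 0` -/
  bracket_e0_n : ∀ i, 1 ≤ i → i ≤ m → ⁅e i 0, e i n⁆ = 0
  /-- `[e_{ij}, e_{i,n-j}] = (-1)^j e_{in}` for `1 ≤ j ≤ n - 1` -/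
  bracket_pair : ∀ i j, 1 ≤ i → i ≤ m → 1 ≤ j → j ≤ n - 1 →
    ⁅e i j, e i (n - j)⁆ = ((-1 : ℂ)) ^ j • e i n
  /-- all remaining brackets inside a component vanish -/
  bracket_zero : ∀ i j k, 1 ≤ i → i ≤ m → 1 ≤ j → j ≤ n → 1 ≤ k → k ≤ n → j + k ≠ n →
    ⁅e i j, e i k⁆ = 0
  /-- distinct components commute: `[N_i, N_{i'}] = 0` -/
  bracket_comm : ∀ i i' j j', 1 ≤ i → i ≤ m → 1 ≤ i' → i' ≤ m → i ≠ i' → j ≤ n → j' ≤ n →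
    ⁅e i j, e i' j'⁆ = 0
  /-- `{e_{i0}, …, e_{in}}` is linearly independent (each `Nᵢ ≅ Qₙ` has it as a basis) -/
  indep_comp : ∀ i, 1 ≤ i → i ≤ m → LinearIndependent ℂ (fun j : Fin (n + 1) => e i (j : ℕ))
  /-- the distinguished family is linearly independent … -/
  basis_indep : LinearIndependent ℂ
    (Sum.elim (fun p : Fin m × Fin n => e ((p.1 : ℕ) + 1) (p.2 : ℕ))
      (fun t : Fin r => e ((t : ℕ) + 1) n))
  /-- … and spans `N`, i.e. it is a basis of `N` (in particular `N = N₁ + ⋯ + N_m`) -/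
  basis_span : Submodule.span ℂ (Set.range
    (Sum.elim (fun p : Fin m × Fin n => e ((p.1 : ℕ) + 1) (p.2 : ℕ))
      (fun t : Fin r => e ((t : ℕ) + 1) n))) = ⊤
  /-- `r = dim c^{n-1} N` -/
  rank_lcs : Module.finrank ℂ (LieModule.lowerCentralSeries ℂ N N (n - 1)) = r

/-!
Write `a = c^{s0}_{s0}` and `b = c^{s1}_{s1}`. Modulo the span of `e_{sk}` (`j < k < n`) and of
the central vectors `e_{in}`, induction along `e_{s,j+1} = [e_{s0}, e_{sj}]` gives
`δ e_{sj} ≡ ((j - 1) a + b) e_{sj}`, and then `e_{sn} = -[e_{s1}, e_{s,n-1}]` is an eigenvector of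
`δ` with eigenvalue `λ_s`. The vectors `e_{1n}, …, e_{rn}` are a basis of `c^{n-1} N`, which
contains every `e_{in}`, so `e_{in}` is a combination of those `e_{tn}` with `λ_t = λ_i`. If two of
the `λ_s` differed, grouping the components `N_i` by the value of `λ_i` would therefore split `N`
into two nonzero ideals spanned by complementary parts of the basis.
-/

theorem LieAlgebra.lie_mem_of_mem_span {R L : Type*} [CommRing R] [LieRing L] [LieAlgebra R L]
    {S : Set L} {P : Submodule R L} {x y : L} (hy : y ∈ Submodule.span R S)
    (h : ∀ z ∈ S, ⁅x, z⁆ ∈ P) : ⁅x, y⁆ ∈ P :=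
  Submodule.span_le.mpr (show S ⊆ P.comap (LieAlgebra.ad R L x) from h) hy

theorem LinearIndependent.mem_span_image_of_apply_eq_smul {ι K M : Type*} [Fintype ι] [Field K]
    [AddCommGroup M] [Module K M] {w : ι → M} (hw : LinearIndependent K w) {f : M →ₗ[K] M}
    {κ : ι → K} (hfw : ∀ i, f (w i) = κ i • w i) {v : M} {c : K}
    (hv : v ∈ Submodule.span K (Set.range w)) (hfv : f v = c • v) :
    v ∈ Submodule.span K (w '' {i | κ i = c}) := by
  obtain ⟨μ, rfl⟩ := (Submodule.mem_span_range_iff_exists_fun K).mp hv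
  have hμ : ∀ i, μ i * (κ i - c) = 0 := by
    refine Fintype.linearIndependent_iff.mp hw _ ?_
    simp only [mul_sub, sub_smul, Finset.sum_sub_distrib, mul_smul, ← hfw, ← map_smul, ← map_sum,
      hfv, Finset.smul_sum, smul_comm c, sub_self]
  refine Submodule.sum_mem _ fun i _ => ?_
  rcases mul_eq_zero.mp (hμ i) with h | h
  · simp [h]
  · exact Submodule.smul_mem _ _ (Submodule.subset_span ⟨i, sub_eq_zero.mp h, rfl⟩)

namespace QuasiQnFiliform

variable {n m r : ℕ} {N : Type*} [LieRing N] [LieAlgebra ℂ N] (Q : QuasiQnFiliform n m r N)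

noncomputable def basis : Module.Basis ((Fin m × Fin n) ⊕ Fin r) ℂ N :=
  Module.Basis.mk Q.basis_indep Q.basis_span.ge

def componentSpan (A : Set ℕ) : Submodule ℂ N :=
  Submodule.span ℂ (Function.uncurry Q.e '' (A ×ˢ Set.Iic n))

variable {Q}

theorem lie_e_zero_e {i k : ℕ} (hi : i ∈ Set.Icc 1 m) (hk : k ≤ n) :
    ⁅Q.e i 0, Q.e i k⁆ = if 1 ≤ k ∧ k ≤ n - 2 then Q.e i (k + 1) else 0 := by
  split_ifs with h
  · exact Q.bracket_e0 i k hi.1 hi.2 h.1 h.2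
  · obtain rfl | rfl | rfl : k = 0 ∨ k = n - 1 ∨ k = n := by omega
    · exact lie_self _
    · exact Q.bracket_e0_top i hi.1 hi.2
    · exact Q.bracket_e0_n i hi.1 hi.2

theorem lie_e_e_of_pos {i j k : ℕ} (hi : i ∈ Set.Icc 1 m) (hj : j ∈ Set.Icc 1 n)
    (hk : k ∈ Set.Icc 1 n) :
    ⁅Q.e i j, Q.e i k⁆ = if j + k = n then (-1 : ℂ) ^ j • Q.e i n else 0 := by
  obtain ⟨hj1, hjn⟩ := hj
  obtain ⟨hk1, hkn⟩ := hk
  split_ifs with h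
  · obtain rfl : k = n - j := by omega
    exact Q.bracket_pair i j hi.1 hi.2 hj1 (by omega)
  · exact Q.bracket_zero i j k hi.1 hi.2 hj1 hjn hk1 hkn h

theorem lie_e_of_ne {i a j b : ℕ} (hi : i ∈ Set.Icc 1 m) (ha : a ∈ Set.Icc 1 m) (hia : i ≠ a)
    (hj : j ≤ n) (hb : b ≤ n) : ⁅Q.e i j, Q.e a b⁆ = 0 :=
  Q.bracket_comm i a j b hi.1 hi.2 ha.1 ha.2 hia hj hb

theorem e_n_eq_neg_lie (hn : 2 ≤ n) {s : ℕ} (hs : s ∈ Set.Icc 1 m) :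
    Q.e s n = -⁅Q.e s 1, Q.e s (n - 1)⁆ := by
  simp [Q.bracket_pair s 1 hs.1 hs.2 le_rfl (by omega)]

theorem e_ne_zero {i k : ℕ} (hi : i ∈ Set.Icc 1 m) (hk : k ≤ n) : Q.e i k ≠ 0 :=
  (Q.indep_comp i hi.1 hi.2).ne_zero (⟨k, by omega⟩ : Fin (n + 1))

theorem e_mem_componentSpan {A : Set ℕ} {i k : ℕ} (hi : i ∈ A) (hk : k ≤ n) :
    Q.e i k ∈ Q.componentSpan A :=
  Submodule.subset_span ⟨(i, k), ⟨hi, hk⟩, rfl⟩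

theorem componentSpan_mono {A B : Set ℕ} (hAB : A ⊆ B) : Q.componentSpan A ≤ Q.componentSpan B :=
  Submodule.span_mono (Set.image_mono (Set.prod_mono hAB le_rfl))

theorem componentSpan_union (A B : Set ℕ) :
    Q.componentSpan (A ∪ B) = Q.componentSpan A ⊔ Q.componentSpan B := by
  rw [componentSpan, Set.union_prod, Set.image_union, Submodule.span_union]; rfl

theorem componentSpan_Icc_eq_top (hrm : r ≤ m) : Q.componentSpan (Set.Icc 1 m) = ⊤ := by
  rw [eq_top_iff, ← Q.basis.span_eq]
  refine Submodule.span_mono ?_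
  rintro _ ⟨p | t, rfl⟩
  · exact ⟨(p.1 + 1, p.2), ⟨⟨by omega, by omega⟩, p.2.isLt.le⟩, by simp [basis]⟩
  · exact ⟨(t + 1, n), ⟨⟨by omega, by omega⟩, Set.mem_Iic.mpr le_rfl⟩, by simp [basis]⟩

variable (Q) in
theorem lie_mem_of_forall_lie_e_mem (hrm : r ≤ m) {P : Submodule ℂ N} {y : N}
    (h : ∀ a ∈ Set.Icc 1 m, ∀ b ≤ n, ⁅y, Q.e a b⁆ ∈ P) (x : N) : ⁅y, x⁆ ∈ P := by
  have hx : x ∈ Q.componentSpan (Set.Icc 1 m) := by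
    rw [componentSpan_Icc_eq_top hrm]; exact Submodule.mem_top
  refine LieAlgebra.lie_mem_of_mem_span hx ?_
  rintro _ ⟨⟨a, b⟩, ⟨ha, hb⟩, rfl⟩
  exact h a ha b hb

theorem e_n_lie (hrm : r ≤ m) {i : ℕ} (hi : i ∈ Set.Icc 1 m) (x : N) : ⁅Q.e i n, x⁆ = 0 := by
  suffices ⁅Q.e i n, x⁆ ∈ (⊥ : Submodule ℂ N) by simpa using this
  refine Q.lie_mem_of_forall_lie_e_mem hrm (fun a ha b hb => ?_) x
  rw [Submodule.mem_bot]
  obtain rfl | hia := eq_or_ne i a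
  · rcases Nat.eq_zero_or_pos b with rfl | hb0
    · rw [← lie_skew, Q.bracket_e0_n i hi.1 hi.2, neg_zero]
    · rw [lie_e_e_of_pos hi ⟨by omega, le_rfl⟩ ⟨hb0, hb⟩, if_neg (by omega)]
  · exact lie_e_of_ne hi ha hia le_rfl hb

theorem lie_e_n (hrm : r ≤ m) {i : ℕ} (hi : i ∈ Set.Icc 1 m) (x : N) : ⁅x, Q.e i n⁆ = 0 := by
  rw [← lie_skew, e_n_lie hrm hi, neg_zero]

theorem lie_e_zero_mem_componentSpan {i k : ℕ} (hi : i ∈ Set.Icc 1 m) (hk : k ≤ n) :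
    ⁅Q.e i 0, Q.e i k⁆ ∈ Q.componentSpan {i} := by
  rw [lie_e_zero_e hi hk]
  split_ifs
  · exact e_mem_componentSpan rfl (by omega)
  · exact zero_mem _

theorem lie_e_mem_componentSpan {i a j b : ℕ} (hi : i ∈ Set.Icc 1 m) (ha : a ∈ Set.Icc 1 m)
    (hj : j ≤ n) (hb : b ≤ n) : ⁅Q.e i j, Q.e a b⁆ ∈ Q.componentSpan {i} := by
  obtain rfl | hia := eq_or_ne i a
  swap
  · rw [lie_e_of_ne hi ha hia hj hb]; exact zero_mem _
  rcases Nat.eq_zero_or_pos j with rfl | hj0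
  · exact lie_e_zero_mem_componentSpan hi hb
  rcases Nat.eq_zero_or_pos b with rfl | hb0
  · rw [← lie_skew]; exact neg_mem (lie_e_zero_mem_componentSpan hi hj)
  rw [lie_e_e_of_pos hi ⟨hj0, hj⟩ ⟨hb0, hb⟩]
  split_ifs
  · exact Submodule.smul_mem _ _ (e_mem_componentSpan rfl le_rfl)
  · exact zero_mem _

theorem lie_mem_componentSpan (hrm : r ≤ m) {A : Set ℕ} (hA : A ⊆ Set.Icc 1 m) (x : N) {y : N}
    (hy : y ∈ Q.componentSpan A) : ⁅x, y⁆ ∈ Q.componentSpan A := by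
  refine LieAlgebra.lie_mem_of_mem_span hy ?_
  rintro _ ⟨⟨i, j⟩, ⟨hi, hj⟩, rfl⟩
  rw [← lie_skew]
  refine neg_mem (Q.lie_mem_of_forall_lie_e_mem hrm (fun a ha b hb => ?_) x)
  exact componentSpan_mono (Set.singleton_subset_iff.mpr hi)
    (lie_e_mem_componentSpan (hA hi) ha hj hb)

variable (Q) in
def componentIdeal (hrm : r ≤ m) (A : Set ℕ) (hA : A ⊆ Set.Icc 1 m) : LieIdeal ℂ N where
  toSubmodule := Q.componentSpan A
  lie_mem := lie_mem_componentSpan hrm hA _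

theorem componentIdeal_ne_bot (hrm : r ≤ m) {A : Set ℕ} (hA : A ⊆ Set.Icc 1 m) {i : ℕ}
    (hi : i ∈ A) : Q.componentIdeal hrm A hA ≠ ⊥ := fun h =>
  e_ne_zero (hA hi) (Nat.zero_le n)
    ((LieSubmodule.eq_bot_iff _).mp h _ (e_mem_componentSpan hi (Nat.zero_le n)))

variable (Q) in
def offDiag (s t : ℕ) : Submodule ℂ N :=
  Submodule.span ℂ (Function.uncurry Q.e '' ((Set.Icc 1 m ×ˢ Set.Iic n) \ {(s, t)}))

variable (Q) in
def centralSpan : Submodule ℂ N :=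
  Submodule.span ℂ ((Q.e · n) '' Set.Icc 1 m)

variable (Q) in
def tail (s j : ℕ) : Submodule ℂ N :=
  Submodule.span ℂ (Q.e s '' Set.Ioo j n ∪ (Q.e · n) '' Set.Icc 1 m)

theorem sum_sub_smul_mem_offDiag (hrm : r ≤ m) {s t : ℕ} (hs : s ∈ Set.Icc 1 m) (ht : t < n)
    (f : ℕ → ℕ → ℂ) :
    (∑ i ∈ Icc 1 m, ∑ j ∈ range n, f i j • Q.e i j + ∑ i ∈ Icc 1 r, f i n • Q.e i n)
      - f s t • Q.e s t ∈ Q.offDiag s t := by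
  have hst : (s, t) ∈ Icc 1 m ×ˢ range n := by simp_all
  rw [← Finset.sum_product' (f := fun i j => f i j • Q.e i j), ← Finset.add_sum_erase _ _ hst,
    add_assoc, add_sub_cancel_left]
  refine add_mem (Submodule.sum_mem _ fun p hp => ?_) (Submodule.sum_mem _ fun i hi => ?_)
  · obtain ⟨hne, hp⟩ := Finset.mem_erase.mp hp
    simp only [Finset.mem_product, Finset.mem_Icc, Finset.mem_range] at hp
    exact Submodule.smul_mem _ _
      (Submodule.subset_span ⟨p, ⟨⟨hp.1, hp.2.le⟩, hne⟩, rfl⟩)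
  · rw [Finset.mem_Icc] at hi
    refine Submodule.smul_mem _ _
      (Submodule.subset_span ⟨(i, n), ⟨⟨⟨hi.1, by omega⟩, Set.mem_Iic.mpr le_rfl⟩, ?_⟩, rfl⟩)
    simp only [Set.mem_singleton_iff, Prod.ext_iff]
    omega

theorem lie_mem_of_mem_offDiag {s t : ℕ} {P : Submodule ℂ N} {y v : N} (hv : v ∈ Q.offDiag s t)
    (h : ∀ i ∈ Set.Icc 1 m, ∀ k ≤ n, (i, k) ≠ (s, t) → ⁅y, Q.e i k⁆ ∈ P) : ⁅y, v⁆ ∈ P := by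
  refine LieAlgebra.lie_mem_of_mem_span hv ?_
  rintro _ ⟨⟨i, k⟩, ⟨⟨hi, hk⟩, hne⟩, rfl⟩
  exact h i hi k hk hne

theorem centralSpan_le_tail (s j : ℕ) : Q.centralSpan ≤ Q.tail s j :=
  Submodule.span_mono Set.subset_union_right

theorem lie_mem_centralSpan_of_mem_offDiag_zero {s j : ℕ} (hs : s ∈ Set.Icc 1 m)
    (hj : j ∈ Set.Icc 1 n) {v : N} (hv : v ∈ Q.offDiag s 0) : ⁅Q.e s j, v⁆ ∈ Q.centralSpan := by
  refine lie_mem_of_mem_offDiag hv fun i hi k hk hne => ?_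
  obtain rfl | hsi := eq_or_ne s i
  · have hk0 : 1 ≤ k := Nat.one_le_iff_ne_zero.mpr fun h => hne (by rw [h])
    rw [lie_e_e_of_pos hs hj ⟨hk0, hk⟩]
    split_ifs
    · exact Submodule.smul_mem _ _ (Submodule.subset_span ⟨s, hs, rfl⟩)
    · exact zero_mem _
  · rw [lie_e_of_ne hs hi hsi hj.2 hk]; exact zero_mem _

theorem lie_e_zero_mem_tail {s j k : ℕ} (hs : s ∈ Set.Icc 1 m) (hk : k ≤ n) (hjk : j < k) :
    ⁅Q.e s 0, Q.e s k⁆ ∈ Q.tail s (j + 1) := by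
  rw [lie_e_zero_e hs hk]
  split_ifs
  · exact Submodule.subset_span (Or.inl ⟨k + 1, ⟨by omega, by omega⟩, rfl⟩)
  · exact zero_mem _

theorem lie_e_zero_mem_tail_of_mem_offDiag_one {s : ℕ} (hs : s ∈ Set.Icc 1 m) {v : N}
    (hv : v ∈ Q.offDiag s 1) : ⁅Q.e s 0, v⁆ ∈ Q.tail s 2 := by
  refine lie_mem_of_mem_offDiag hv fun i hi k hk hne => ?_
  obtain rfl | hsi := eq_or_ne s i
  · rcases Nat.eq_zero_or_pos k with rfl | hk0
    · rw [lie_self]; exact zero_mem _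
    · exact lie_e_zero_mem_tail hs hk (Nat.lt_of_le_of_ne hk0 fun h => hne (by rw [h]))
  · rw [lie_e_of_ne hs hi hsi (Nat.zero_le n) hk]; exact zero_mem _

theorem lie_e_pred_eq_zero_of_mem_offDiag_one (hn : 2 ≤ n) {s : ℕ} (hs : s ∈ Set.Icc 1 m) {v : N}
    (hv : v ∈ Q.offDiag s 1) : ⁅Q.e s (n - 1), v⁆ = 0 := by
  suffices ⁅Q.e s (n - 1), v⁆ ∈ (⊥ : Submodule ℂ N) by simpa using this
  refine lie_mem_of_mem_offDiag hv fun i hi k hk hne => ?_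
  rw [Submodule.mem_bot]
  obtain rfl | hsi := eq_or_ne s i
  · rcases Nat.eq_zero_or_pos k with rfl | hk0
    · rw [← lie_skew, Q.bracket_e0_top s hs.1 hs.2, neg_zero]
    · have hk1 : k ≠ 1 := fun h => hne (by rw [h])
      rw [lie_e_e_of_pos hs ⟨by omega, by omega⟩ ⟨hk0, hk⟩, if_neg (by omega)]
  · exact lie_e_of_ne hs hi hsi (by omega) hk

theorem lie_e_zero_mem_tail_succ (hrm : r ≤ m) {s j : ℕ} (hs : s ∈ Set.Icc 1 m) {v : N}
    (hv : v ∈ Q.tail s j) : ⁅Q.e s 0, v⁆ ∈ Q.tail s (j + 1) := by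
  refine LieAlgebra.lie_mem_of_mem_span hv ?_
  rintro _ (⟨k, hk, rfl⟩ | ⟨i, hi, rfl⟩)
  · exact lie_e_zero_mem_tail hs hk.2.le hk.1
  · rw [lie_e_n hrm hi]; exact zero_mem _

theorem lie_eq_zero_of_mem_tail_pred (hrm : r ≤ m) {s : ℕ} {v : N} (hv : v ∈ Q.tail s (n - 1))
    (x : N) : ⁅x, v⁆ = 0 := by
  suffices ⁅x, v⁆ ∈ (⊥ : Submodule ℂ N) by simpa using this
  refine LieAlgebra.lie_mem_of_mem_span hv ?_
  rintro _ (⟨k, hk, rfl⟩ | ⟨i, hi, rfl⟩)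
  · exact absurd hk.2 (by have := hk.1; omega)
  · rw [lie_e_n hrm hi]; exact zero_mem _

section Derivation

variable (hrm : r ≤ m) (hn : 3 ≤ n) {s : ℕ} (hs : s ∈ Set.Icc 1 m) (δ : LieDerivation ℂ N N)
  {a b : ℂ} (ha : δ (Q.e s 0) - a • Q.e s 0 ∈ Q.offDiag s 0)
  (hb : δ (Q.e s 1) - b • Q.e s 1 ∈ Q.offDiag s 1)
include hrm hn hs ha hb

theorem derivation_sub_smul_mem_tail {j : ℕ} (hj2 : 2 ≤ j) (hj : j ≤ n - 1) :
    δ (Q.e s j) - (((j : ℂ) - 1) * a + b) • Q.e s j ∈ Q.tail s j := by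
  induction j, hj2 using Nat.le_induction with
  | base =>
    have h0 := centralSpan_le_tail s 2
      (lie_mem_centralSpan_of_mem_offDiag_zero (j := 1) hs ⟨le_rfl, by omega⟩ ha)
    have h1 := lie_e_zero_mem_tail_of_mem_offDiag_one hs hb
    rw [← Q.bracket_e0 s 1 hs.1 hs.2 le_rfl (by omega), LieDerivation.apply_lie_eq_add]
    convert sub_mem h1 h0 using 1
    simp only [lie_sub, lie_smul]
    rw [← lie_skew (Q.e s 1) (δ (Q.e s 0)), ← lie_skew (Q.e s 1) (Q.e s 0)]
    push_cast
    module
  | succ j hj2 ih =>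
    have h0 := centralSpan_le_tail s (j + 1)
      (lie_mem_centralSpan_of_mem_offDiag_zero (j := j) hs ⟨by omega, by omega⟩ ha)
    have h1 := lie_e_zero_mem_tail_succ hrm hs (ih (by omega))
    rw [← Q.bracket_e0 s j hs.1 hs.2 (by omega) (by omega), LieDerivation.apply_lie_eq_add]
    convert sub_mem h1 h0 using 1
    simp only [lie_sub, lie_smul]
    rw [← lie_skew (Q.e s j) (δ (Q.e s 0)), ← lie_skew (Q.e s j) (Q.e s 0)]
    push_cast
    module

theorem derivation_apply_e_n : δ (Q.e s n) = (((n - 2 : ℕ) : ℂ) * a + 2 * b) • Q.e s n := by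
  have h1 : ⁅δ (Q.e s 1), Q.e s (n - 1)⁆ = b • ⁅Q.e s 1, Q.e s (n - 1)⁆ := by
    have := lie_e_pred_eq_zero_of_mem_offDiag_one (by omega) hs hb
    rwa [← lie_skew, neg_eq_zero, sub_lie, smul_lie, sub_eq_zero] at this
  have h2 : ⁅Q.e s 1, δ (Q.e s (n - 1))⁆
      = ((((n - 1 : ℕ) : ℂ) - 1) * a + b) • ⁅Q.e s 1, Q.e s (n - 1)⁆ := by
    have := lie_eq_zero_of_mem_tail_pred hrm
      (derivation_sub_smul_mem_tail hrm hn hs δ ha hb (by omega) le_rfl) (Q.e s 1)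
    rwa [lie_sub, lie_smul, sub_eq_zero] at this
  rw [e_n_eq_neg_lie (by omega) hs, map_neg, LieDerivation.apply_lie_eq_add, h1, h2, ← add_smul,
    smul_neg]
  congr 2
  push_cast [Nat.cast_sub (by omega : 1 ≤ n), Nat.cast_sub (by omega : 2 ≤ n)]
  ring

end Derivation

theorem e_mem_lowerCentralSeries {s j : ℕ} (hs : s ∈ Set.Icc 1 m) (hj1 : 1 ≤ j)
    (hj : j ≤ n - 1) :
    Q.e s j ∈ LieModule.lowerCentralSeries ℂ N N (j - 1) := by
  induction j, hj1 using Nat.le_induction with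
  | base => exact LieSubmodule.mem_top _
  | succ j hj1 ih =>
    rw [← Q.bracket_e0 s j hs.1 hs.2 hj1 (by omega), show j + 1 - 1 = j - 1 + 1 by omega,
      LieModule.lowerCentralSeries_succ]
    exact LieSubmodule.lie_mem_lie (LieSubmodule.mem_top _) (ih (by omega))

theorem e_n_mem_lowerCentralSeries (hn : 2 ≤ n) {s : ℕ} (hs : s ∈ Set.Icc 1 m) :
    Q.e s n ∈ LieModule.lowerCentralSeries ℂ N N (n - 1) := by
  have h := LieSubmodule.lie_mem_lie (LieSubmodule.mem_top (Q.e s 1))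
    (e_mem_lowerCentralSeries (Q := Q) hs (j := n - 1) (by omega) le_rfl)
  rw [← LieModule.lowerCentralSeries_succ, show n - 1 - 1 + 1 = n - 1 by omega] at h
  rw [e_n_eq_neg_lie hn hs]
  exact neg_mem h

variable (Q) in
theorem linearIndependent_e_n : LinearIndependent ℂ (fun t : Fin r => Q.e (t + 1) n) :=
  Q.basis_indep.comp Sum.inr Sum.inr_injective

theorem span_e_n_eq_lowerCentralSeries (hn : 2 ≤ n) (hrm : r ≤ m) :
    Submodule.span ℂ (Set.range fun t : Fin r => Q.e (t + 1) n)
      = (LieModule.lowerCentralSeries ℂ N N (n - 1)).toSubmodule := by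
  have := Q.findim
  refine Submodule.eq_of_le_of_finrank_le ?_ ?_
  · rw [Submodule.span_le]
    rintro _ ⟨t, rfl⟩
    exact e_n_mem_lowerCentralSeries hn ⟨by omega, by omega⟩
  · rw [finrank_span_eq_card Q.linearIndependent_e_n, Fintype.card_fin, ← Q.rank_lcs]
    rfl

theorem e_n_mem_span_e_n (hn : 2 ≤ n) (hrm : r ≤ m) {i : ℕ} (hi : i ∈ Set.Icc 1 m) :
    Q.e i n ∈ Submodule.span ℂ (Set.range fun t : Fin r => Q.e (t + 1) n) := by
  rw [span_e_n_eq_lowerCentralSeries hn hrm]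
  exact e_n_mem_lowerCentralSeries hn hi

def basisComponent : (Fin m × Fin n) ⊕ Fin r → ℕ :=
  Sum.elim (fun p => p.1 + 1) (fun t => t + 1)

section Decomposition

variable {κ : ℕ → ℂ} (hκ : ∀ i ∈ Set.Icc 1 m, Q.e i n ∈
  Submodule.span ℂ ((fun t : Fin r => Q.e (t + 1) n) '' {t | κ (t + 1) = κ i}))
include hκ

theorem componentSpan_le_span_basis (Z : Set ℂ) :
    Q.componentSpan (Set.Icc 1 m ∩ κ ⁻¹' Z)
      ≤ Submodule.span ℂ (Q.basis '' ((κ ∘ basisComponent) ⁻¹' Z)) := by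
  rw [componentSpan, Submodule.span_le]
  rintro _ ⟨⟨i, k⟩, ⟨⟨⟨hi1, him⟩, hiZ⟩, hk⟩, rfl⟩
  obtain hk | rfl := (Set.mem_Iic.mp hk).lt_or_eq
  · refine Submodule.subset_span ⟨Sum.inl (⟨i - 1, by omega⟩, ⟨k, hk⟩), ?_, ?_⟩
    · show κ (i - 1 + 1) ∈ Z
      rwa [Nat.sub_add_cancel hi1]
    · simp [basis, Nat.sub_add_cancel hi1]
  · refine Submodule.span_mono ?_ (hκ i ⟨hi1, him⟩)
    rintro _ ⟨t, ht, rfl⟩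
    refine ⟨Sum.inr t, ?_, by simp [basis]⟩
    show κ (t + 1) ∈ Z
    rwa [show κ (t + 1) = κ i from ht]

theorem exists_lieIdeal_decomposition (hrm : r ≤ m) {s p : ℕ} (hs : s ∈ Set.Icc 1 m)
    (hp : p ∈ Set.Icc 1 m) (hsp : κ s ≠ κ p) :
    ∃ I J : LieIdeal ℂ N, I ≠ ⊥ ∧ J ≠ ⊥ ∧ I ⊓ J = ⊥ ∧ I ⊔ J = ⊤ := by
  set Z : Set ℂ := {κ s}
  refine ⟨Q.componentIdeal hrm (Set.Icc 1 m ∩ κ ⁻¹' Z) Set.inter_subset_left,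
    Q.componentIdeal hrm (Set.Icc 1 m ∩ κ ⁻¹' Zᶜ) Set.inter_subset_left, ?_, ?_, ?_, ?_⟩
  · exact componentIdeal_ne_bot hrm _ ⟨hs, rfl⟩
  · exact componentIdeal_ne_bot hrm _ ⟨hp, hsp.symm⟩
  · rw [← LieSubmodule.toSubmodule_eq_bot, LieSubmodule.inf_toSubmodule]
    exact disjoint_iff.mp <|
      (Q.basis.linearIndependent.disjoint_span_image disjoint_compl_right).mono
        (componentSpan_le_span_basis hκ Z) (componentSpan_le_span_basis hκ Zᶜ)
  · rw [← LieSubmodule.toSubmodule_eq_top, LieSubmodule.sup_toSubmodule]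
    show Q.componentSpan _ ⊔ Q.componentSpan _ = ⊤
    rw [← componentSpan_union, ← Set.inter_union_distrib_left, ← Set.preimage_union,
      Set.union_compl_self, Set.preimage_univ, Set.inter_univ, componentSpan_Icc_eq_top hrm]

end Decomposition

end QuasiQnFiliform

open Finset in
theorem derivation_lambda_eq_of_indecomposable_general
    (n d m r : ℕ) (hn : n = 2 * d + 1) (hd : 2 ≤ d)
    (hrm : r ≤ m)
    (N : Type*) [LieRing N] [LieAlgebra ℂ N] (Q : QuasiQnFiliform n m r N)
    (hind : ¬ ∃ I J : LieIdeal ℂ N, I ≠ ⊥ ∧ J ≠ ⊥ ∧ I ⊓ J = ⊥ ∧ I ⊔ J = ⊤)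
    (δ : LieDerivation ℂ N N) (c : ℕ → ℕ → ℕ → ℕ → ℂ)
    (hc : ∀ s t, 1 ≤ s → s ≤ m → t ≤ 1 →
      δ (Q.e s t) = ∑ i ∈ Icc 1 m, ∑ j ∈ range n, c s t i j • Q.e i j
        + ∑ i ∈ Icc 1 r, c s t i n • Q.e i n) :
    ∀ s p, 1 ≤ s → s ≤ m → 1 ≤ p → p ≤ m →
      ((n - 2 : ℕ) : ℂ) * c s 0 s 0 + 2 * c s 1 s 1
        = ((n - 2 : ℕ) : ℂ) * c p 0 p 0 + 2 * c p 1 p 1 := by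
  intro s p hs1 hsm hp1 hpm
  have hn3 : 3 ≤ n := by omega
  set κ : ℕ → ℂ := fun i => ((n - 2 : ℕ) : ℂ) * c i 0 i 0 + 2 * c i 1 i 1
  have hdiag : ∀ i ∈ Set.Icc 1 m, ∀ t ≤ 1, δ (Q.e i t) - c i t i t • Q.e i t ∈ Q.offDiag i t :=
    fun i hi t ht => hc i t hi.1 hi.2 ht ▸ Q.sum_sub_smul_mem_offDiag hrm hi (by omega) _
  have heigen : ∀ i ∈ Set.Icc 1 m, δ (Q.e i n) = κ i • Q.e i n := fun i hi =>
    Q.derivation_apply_e_n hrm hn3 hi δ (hdiag i hi 0 (by omega)) (hdiag i hi 1 le_rfl)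
  have hκ : ∀ i ∈ Set.Icc 1 m, Q.e i n ∈
      Submodule.span ℂ ((fun t : Fin r => Q.e (t + 1) n) '' {t | κ (t + 1) = κ i}) :=
    fun i hi => Q.linearIndependent_e_n.mem_span_image_of_apply_eq_smul (f := δ)
      (fun t => heigen _ ⟨by omega, by omega⟩) (Q.e_n_mem_span_e_n (by omega) hrm hi)
      (heigen i hi)
  by_contra hne
  exact hind (Q.exists_lieIdeal_decomposition hκ hrm ⟨hs1, hsm⟩ ⟨hp1, hpm⟩ hne)

open Finset in
/-- **Lemma 2.1.** Let `N = N(Qₙ, m, r)` be an indecomposable quasi `Qₙ`-filiform Lie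
algebra (not a direct sum of two nonzero ideals) and let `δ` be a derivation of `N` with
`δ e_{st} = Σ_{i=1}^m Σ_{j=0}^{n-1} c^{st}_{ij} e_{ij} + Σ_{i=1}^r c^{st}_{in} e_{in}`
for `t = 0, 1`.  Then `λ₁ = λ₂ = ⋯ = λ_m`, where
`λ_s = (n-2) c^{s0}_{s0} + 2 c^{s1}_{s1}`. -/
theorem derivation_lambda_eq_of_indecomposable
    (n d m r : ℕ) (hn : n = 2 * d + 1) (hd : 2 ≤ d)
    (hm : 1 ≤ m) (hr : 1 ≤ r) (hrm : r ≤ m)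
    (N : Type*) [LieRing N] [LieAlgebra ℂ N] (Q : QuasiQnFiliform n m r N)
    (hind : ¬ ∃ I J : LieIdeal ℂ N, I ≠ ⊥ ∧ J ≠ ⊥ ∧ I ⊓ J = ⊥ ∧ I ⊔ J = ⊤)
    (δ : LieDerivation ℂ N N) (c : ℕ → ℕ → ℕ → ℕ → ℂ)
    (hc : ∀ s t, 1 ≤ s → s ≤ m → t ≤ 1 →
      δ (Q.e s t) = ∑ i ∈ Icc 1 m, ∑ j ∈ range n, c s t i j • Q.e i j
        + ∑ i ∈ Icc 1 r, c s t i n • Q.e i n) :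
    ∀ s p, 1 ≤ s → s ≤ m → 1 ≤ p → p ≤ m →
      ((n - 2 : ℕ) : ℂ) * c s 0 s 0 + 2 * c s 1 s 1
        = ((n - 2 : ℕ) : ℂ) * c p 0 p 0 + 2 * c p 1 p 1 :=
  derivation_lambda_eq_of_indecomposable_general n d m r hn hd hrm N Q hind δ c hc
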